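/- arXiv:2407.18904 — 3 statements merged into one kernel-verified Lean document; each statement's English description precedes it below -/
import Mathlib

section
/- The group of isometries of the lattice ℤ² with Gram matrix diag(6,-4) is generated by -Id together with the reflections R₁ = [[1,0],[0,-1]] and R₂ = [[5,-4],[6,-5]], and the subgroup ⟨R₁, R₂⟩ is infinite (it contains the infinite-order element R₁R₂). -/
open Matrix

def G12 : Matrix (Fin 2) (Fin 2) ℤ := !![6, 0; 0, -4]
def R₁ : Matrix (Fin 2) (Fin 2) ℤ := !![1, 0; 0, -1]
def R₂ : Matrix (Fin 2) (Fin 2) ℤ := !![5, -4; 6, -5]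

private lemma natAbs_lt_of_sq_lt_sq {x y : ℤ} (h : x ^ 2 < y ^ 2) :
    x.natAbs < y.natAbs := by
  by_contra hc
  push_neg at hc
  have h1 : (y.natAbs : ℤ) ≤ (x.natAbs : ℤ) := by exact_mod_cast hc
  have h2 : (y.natAbs : ℤ) ^ 2 ≤ (x.natAbs : ℤ) ^ 2 :=
    pow_le_pow_left₀ (by positivity) h1 2
  rw [Int.natAbs_sq, Int.natAbs_sq] at h2
  linarith

-- key descent inequality
private lemma descent_ineq {a c : ℤ} (h : a * 6 * a + -(c * 4 * c) = 6)
    (h2 : 2 ≤ a.natAbs) (hpos : 0 < a * c) : (5 * a - 4 * c).natAbs < a.natAbs := by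
  have h2c : 2 * c ^ 2 = 3 * a ^ 2 - 3 := by nlinarith [h]
  have ha2 : 4 ≤ a ^ 2 := by
    have : (2 : ℤ) ≤ |a| := by
      rw [Int.abs_eq_natAbs]; exact_mod_cast h2
    nlinarith [sq_abs a]
  have h3 : a ^ 2 * (2 * c ^ 2) = a ^ 2 * (3 * a ^ 2 - 3) := by rw [h2c]
  have hsq : (6 * a ^ 2 - 3) ^ 2 < (5 * (a * c)) ^ 2 := by
    nlinarith [h3, ha2, mul_nonneg (sub_nonneg.2 ha2) (sq_nonneg a)]
  have key : 6 * a ^ 2 - 3 < 5 * (a * c) := by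
    nlinarith [hsq, hpos, sq_nonneg (5 * (a * c) - (6 * a ^ 2 - 3))]
  apply natAbs_lt_of_sq_lt_sq
  nlinarith [key, h2c]

private lemma R₁_invol : R₁ * R₁ = 1 := by
  ext i j; fin_cases i <;> fin_cases j <;>
    simp [R₁, Matrix.mul_apply, Fin.sum_univ_two, Matrix.one_apply]

private lemma R₂_invol : R₂ * R₂ = 1 := by
  ext i j; fin_cases i <;> fin_cases j <;>
    simp [R₂, Matrix.mul_apply, Fin.sum_univ_two, Matrix.one_apply]

private lemma R₁_iso : R₁ᵀ * G12 * R₁ = G12 := by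
  have : R₁ᵀ = R₁ := by ext i j; fin_cases i <;> fin_cases j <;> rfl
  rw [this]
  ext i j; fin_cases i <;> fin_cases j <;>
    simp [G12, R₁, Matrix.mul_apply, Fin.sum_univ_two]

private lemma R₂_iso : R₂ᵀ * G12 * R₂ = G12 := by
  have : R₂ᵀ = !![5, 6; -4, -5] := by ext i j; fin_cases i <;> fin_cases j <;> rfl
  rw [this]
  ext i j; fin_cases i <;> fin_cases j <;>
    simp [G12, R₂, Matrix.mul_apply, Fin.sum_univ_two]

private lemma iso_mul {R M : Matrix (Fin 2) (Fin 2) ℤ} (hR : Rᵀ * G12 * R = G12)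
    (hM : Mᵀ * G12 * M = G12) : (R * M)ᵀ * G12 * (R * M) = G12 := by
  have : (R * M)ᵀ * G12 * (R * M) = Mᵀ * (Rᵀ * G12 * R) * M := by
    simp [Matrix.transpose_mul, Matrix.mul_assoc]
  rw [this, hR, hM]

private lemma mul_entry00 (R M : Matrix (Fin 2) (Fin 2) ℤ) :
    (R * M) 0 0 = R 0 0 * M 0 0 + R 0 1 * M 1 0 := by
  simp [Matrix.mul_apply, Fin.sum_univ_two]

private lemma descent (n : ℕ) : ∀ M : Matrix (Fin 2) (Fin 2) ℤ, Mᵀ * G12 * M = G12 →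
    (M 0 0).natAbs ≤ n →
    M ∈ Submonoid.closure ({-1, R₁, R₂} : Set (Matrix (Fin 2) (Fin 2) ℤ)) := by
  induction n with
  | zero =>
    intro M H hle
    have h00 := congrFun (congrFun H 0) 0
    simp [G12, Matrix.mul_apply, Matrix.transpose_apply, Fin.sum_univ_two] at h00
    have ha : M 0 0 = 0 := by omega
    rw [ha] at h00
    nlinarith [mul_self_nonneg (M 1 0)]
  | succ n ih =>
    intro M H hle
    have h00 := congrFun (congrFun H 0) 0
    have h01 := congrFun (congrFun H 0) 1
    have h11 := congrFun (congrFun H 1) 1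
    simp [G12, Matrix.mul_apply, Matrix.transpose_apply, Fin.sum_univ_two] at h00 h01 h11
    set a := M 0 0 with ha
    set b := M 0 1 with hb
    set c := M 1 0 with hc
    set d := M 1 1 with hd
    have hAne : a ≠ 0 := by
      intro h0; rw [h0] at h00; nlinarith [mul_self_nonneg c]
    rcases le_or_gt (a.natAbs) 1 with h1 | hgt
    · -- base case : |a| = 1
      have ha1 : a = 1 ∨ a = -1 := by
        rcases Int.natAbs_eq a with h | h <;> omega
      have hc0 : c = 0 := by
        have : c * c = 0 := by rcases ha1 with h | h <;> rw [h] at h00 <;> nlinarith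
        exact mul_self_eq_zero.mp this
      have hb0 : b = 0 := by
        rw [hc0] at h01
        rcases ha1 with h | h <;> rw [h] at h01 <;> linarith
      have hd1 : d = 1 ∨ d = -1 := by
        rw [hb0] at h11
        have hdd : d * d = 1 := by nlinarith
        rcases Int.isUnit_iff.mp (IsUnit.of_mul_eq_one d hdd) with h | h
        exacts [Or.inl h, Or.inr h]
      have hM : M = !![a, b; c, d] := by
        rw [ha, hb, hc, hd]; exact Matrix.eta_fin_two M
      have mem1 : (-1 : Matrix (Fin 2) (Fin 2) ℤ) ∈
          Submonoid.closure ({-1, R₁, R₂} : Set (Matrix (Fin 2) (Fin 2) ℤ)) :=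
        Submonoid.subset_closure (by left; rfl)
      have memR₁ : R₁ ∈ Submonoid.closure ({-1, R₁, R₂} : Set (Matrix (Fin 2) (Fin 2) ℤ)) :=
        Submonoid.subset_closure (by right; left; rfl)
      rw [hM, hb0, hc0]
      rcases ha1 with h | h <;> rcases hd1 with h' | h' <;> rw [h, h']
      · have : (!![(1:ℤ), 0; 0, 1] : Matrix (Fin 2) (Fin 2) ℤ) = 1 := by
          ext i j; fin_cases i <;> fin_cases j <;> simp [Matrix.one_apply]
        rw [this]; exact one_mem _
      · have : (!![(1:ℤ), 0; 0, -1] : Matrix (Fin 2) (Fin 2) ℤ) = R₁ := rfl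
        rw [this]; exact memR₁
      · have : (!![(-1:ℤ), 0; 0, 1] : Matrix (Fin 2) (Fin 2) ℤ) = (-1) * R₁ := by
          ext i j; fin_cases i <;> fin_cases j <;>
            simp [R₁, Matrix.mul_apply, Fin.sum_univ_two]
        rw [this]; exact mul_mem mem1 memR₁
      · have : (!![(-1:ℤ), 0; 0, -1] : Matrix (Fin 2) (Fin 2) ℤ) = -1 := by
          ext i j; fin_cases i <;> fin_cases j <;>
            simp [Matrix.one_apply]
        rw [this]; exact mem1
    · -- descent case : |a| ≥ 2
      have memR₁ : R₁ ∈ Submonoid.closure ({-1, R₁, R₂} : Set (Matrix (Fin 2) (Fin 2) ℤ)) :=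
        Submonoid.subset_closure (by right; left; rfl)
      have memR₂ : R₂ ∈ Submonoid.closure ({-1, R₁, R₂} : Set (Matrix (Fin 2) (Fin 2) ℤ)) :=
        Submonoid.subset_closure (by right; right; rfl)
      have hcne : c ≠ 0 := by
        intro h0; rw [h0] at h00
        have : a * a = 1 := by nlinarith
        have : a = 1 ∨ a = -1 := by
          rcases Int.isUnit_iff.mp (IsUnit.of_mul_eq_one a this) with h | h
          exacts [Or.inl h, Or.inr h]
        omega
      rcases lt_trichotomy (a * c) 0 with hac | hac | hac
      · -- use R₁ first to flip sign of c
        have hNiso : (R₁ * M)ᵀ * G12 * (R₁ * M) = G12 := iso_mul R₁_iso H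
        have hN00 : (R₁ * M) 0 0 = a := by
          rw [mul_entry00]; simp [R₁]; rfl
        have hN10 : (R₁ * M) 1 0 = -c := by
          simp [R₁, Matrix.mul_apply, Fin.sum_univ_two]; rfl
        have hiso2 : (R₂ * (R₁ * M))ᵀ * G12 * (R₂ * (R₁ * M)) = G12 := iso_mul R₂_iso hNiso
        have hdec : ((R₂ * (R₁ * M)) 0 0).natAbs < a.natAbs := by
          have he : (R₂ * (R₁ * M)) 0 0 = 5 * a - 4 * (-c) := by
            rw [mul_entry00, hN00, hN10]; simp [R₂]
          rw [he]
          have h00' : a * 6 * a + -(-c * 4 * -c) = 6 := by linarith [h00]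
          exact descent_ineq h00' (by omega) (by nlinarith)
        have hmem : R₂ * (R₁ * M) ∈
            Submonoid.closure ({-1, R₁, R₂} : Set (Matrix (Fin 2) (Fin 2) ℤ)) :=
          ih (R₂ * (R₁ * M)) hiso2 (by omega)
        have hMeq : M = R₁ * (R₂ * (R₂ * (R₁ * M))) := by
          rw [← Matrix.mul_assoc R₂ R₂, R₂_invol, Matrix.one_mul,
            ← Matrix.mul_assoc R₁ R₁, R₁_invol, Matrix.one_mul]
        rw [hMeq]
        exact mul_mem memR₁ (mul_mem memR₂ hmem)
      · exact absurd (mul_eq_zero.mp hac) (by push_neg; exact ⟨hAne, hcne⟩)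
      · have hiso2 : (R₂ * M)ᵀ * G12 * (R₂ * M) = G12 := iso_mul R₂_iso H
        have hdec : ((R₂ * M) 0 0).natAbs < a.natAbs := by
          have he : (R₂ * M) 0 0 = 5 * a - 4 * c := by
            rw [mul_entry00]; simp [R₂]; ring
          rw [he]
          exact descent_ineq h00 (by omega) hac
        have hmem : R₂ * M ∈ Submonoid.closure ({-1, R₁, R₂} : Set (Matrix (Fin 2) (Fin 2) ℤ)) :=
          ih (R₂ * M) hiso2 (by omega)
        have hMeq : M = R₂ * (R₂ * M) := by
          rw [← Matrix.mul_assoc, R₂_invol, Matrix.one_mul]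
        rw [hMeq]
        exact mul_mem memR₂ hmem

private lemma T_eq : R₁ * R₂ = !![5, -4; -6, 5] := by
  ext i j; fin_cases i <;> fin_cases j <;>
    simp [R₁, R₂, Matrix.mul_apply, Fin.sum_univ_two]

private lemma T_pow_entries (n : ℕ) :
    5 ≤ ((R₁ * R₂) ^ (n + 1)) 0 0 ∧ ((R₁ * R₂) ^ (n + 1)) 0 1 ≤ -4 ∧
    ((R₁ * R₂) ^ (n + 1)) 1 0 ≤ -6 ∧ 5 ≤ ((R₁ * R₂) ^ (n + 1)) 1 1 := by
  induction n with
  | zero =>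
    rw [pow_one, T_eq]
    norm_num
  | succ n ih =>
    obtain ⟨h1, h2, h3, h4⟩ := ih
    have hp : (R₁ * R₂) ^ (n + 1 + 1) = (R₁ * R₂) * (R₁ * R₂) ^ (n + 1) := by
      rw [← pow_succ']
    rw [T_eq] at h1 h2 h3 h4
    rw [hp, T_eq]
    refine ⟨?_, ?_, ?_, ?_⟩ <;>
      simp only [Matrix.mul_apply, Fin.sum_univ_two] <;>
      simp <;> linarith

private lemma T_not_finOrder : ¬ IsOfFinOrder (R₁ * R₂) := by
  rw [isOfFinOrder_iff_pow_eq_one]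
  rintro ⟨n, hn, hne⟩
  obtain ⟨m, rfl⟩ : ∃ m, n = m + 1 := ⟨n - 1, by omega⟩
  have := (T_pow_entries m).1
  rw [hne] at this
  simp [Matrix.one_apply] at this

/-- The isometry group of the lattice `ℤ²` with Gram matrix `diag(6,-4)` is generated
by `-Id` together with the reflections `R₁` and `R₂` (since all three generators are
involutions, the submonoid they generate is the group they generate), and the subgroup
generated by `R₁` and `R₂` is infinite: it contains the infinite-order element `R₁R₂`. -/
theorem isometry_group_diag_6_neg4_generated :
    (∀ M : Matrix (Fin 2) (Fin 2) ℤ, Mᵀ * G12 * M = G12 →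
      M ∈ Submonoid.closure ({-1, R₁, R₂} : Set (Matrix (Fin 2) (Fin 2) ℤ))) ∧
    ¬ IsOfFinOrder (R₁ * R₂) ∧
    (Submonoid.closure ({R₁, R₂} : Set (Matrix (Fin 2) (Fin 2) ℤ)) :
      Set (Matrix (Fin 2) (Fin 2) ℤ)).Infinite := by
  refine ⟨fun M H => descent (M 0 0).natAbs M H le_rfl, T_not_finOrder, ?_⟩
  -- the unit corresponding to R₁ * R₂
  have hinv : (R₁ * R₂) * (R₂ * R₁) = 1 := by
    rw [Matrix.mul_assoc, ← Matrix.mul_assoc R₂, R₂_invol, Matrix.one_mul, R₁_invol]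
  have hinv' : (R₂ * R₁) * (R₁ * R₂) = 1 := by
    rw [Matrix.mul_assoc, ← Matrix.mul_assoc R₁, R₁_invol, Matrix.one_mul, R₂_invol]
  set u : (Matrix (Fin 2) (Fin 2) ℤ)ˣ := ⟨R₁ * R₂, R₂ * R₁, hinv, hinv'⟩ with hu
  have hufin : ¬ IsOfFinOrder u := by
    intro h
    apply T_not_finOrder
    rw [isOfFinOrder_iff_pow_eq_one] at h ⊢
    obtain ⟨n, hn, hne⟩ := h
    refine ⟨n, hn, ?_⟩
    have : ((u ^ n : (Matrix (Fin 2) (Fin 2) ℤ)ˣ) : Matrix (Fin 2) (Fin 2) ℤ) = 1 := by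
      rw [hne]; rfl
    rwa [Units.val_pow_eq_pow_val] at this
  have hinj : Function.Injective (fun n : ℕ => u ^ n) :=
    injective_pow_iff_not_isOfFinOrder.mpr hufin
  have hinj2 : Function.Injective (fun n : ℕ => (R₁ * R₂) ^ n) := by
    intro m n hmn
    exact hinj (Units.ext (by simpa [Units.val_pow_eq_pow_val] using hmn))
  have hmem2 : ∀ n : ℕ, (R₁ * R₂) ^ n ∈
      Submonoid.closure ({R₁, R₂} : Set (Matrix (Fin 2) (Fin 2) ℤ)) := fun n =>
    pow_mem (mul_mem (Submonoid.subset_closure (by left; rfl))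
      (Submonoid.subset_closure (by right; rfl))) n
  exact Set.infinite_of_injective_forall_mem hinj2 hmem2
end

section
/- The rank-3 lattice with Gram matrix [[6,0,0],[0,-4,2],[0,2,-4]] does not represent -2; i.e., there is no integer solution to 6a² - 4b² - 4c² + 4bc = -2. -/
/-!
Halving the equation gives `3a² + 1 = 2(b² - bc + c²)`, so `b² - bc + c² ≡ 2 (mod 3)`.
But `4(b² - bc + c²) = (2b - c)² + 3c²`, so `b² - bc + c²` is congruent to a square modulo 3,
and squares are `0` or `1` modulo 3.
-/

theorem Int.sq_emod_three_ne_two (x : ℤ) : x ^ 2 % 3 ≠ 2 := by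
  have hx : x % 3 = 0 ∨ x % 3 = 1 ∨ x % 3 = 2 := by omega
  rcases hx with hx | hx | hx <;> simp [pow_two, Int.mul_emod, hx]

theorem Int.sq_sub_mul_add_sq_emod_three_ne_two (b c : ℤ) : (b ^ 2 - b * c + c ^ 2) % 3 ≠ 2 := by
  have hsq := Int.sq_emod_three_ne_two (2 * b - c)
  have hnorm : 4 * (b ^ 2 - b * c + c ^ 2) = (2 * b - c) ^ 2 + 3 * c ^ 2 := by ring
  omega

/-- The rank-3 lattice with Gram matrix `[[6,0,0],[0,-4,2],[0,2,-4]]` does not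
represent -2: there is no integer solution to `6a² - 4b² - 4c² + 4bc = -2`. -/
theorem Jnonsyz_does_not_represent_neg_two :
    ¬ ∃ a b c : ℤ, 6 * a ^ 2 - 4 * b ^ 2 - 4 * c ^ 2 + 4 * b * c = -2 := by
  rintro ⟨a, b, c, h⟩
  have hhalf : 2 * (b ^ 2 - b * c + c ^ 2) = 3 * a ^ 2 + 1 := by linarith
  exact Int.sq_sub_mul_add_sq_emod_three_ne_two b c (by omega)
end

section
/- Let v = (a,b,c) ∈ ℤ³ satisfy 3a² - 2b² - 2c² = -5 with a > 1 and (|c| < |a| < |b| or |b| < |a| < |c|). Then exactly one of the four vectors (5a+4b, -6a-5b, -c), (5a-4b, 6a-5b, -c), (5a+4c, -b, -6a-5c), (5a-4c, -b, 6a-5c) has first coordinate of absolute value strictly less than |a|. -/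
/-- If `v = (a,b,c) ∈ ℤ³` satisfies `3a² - 2b² - 2c² = -5`, `a > 1`, and
(`|c| < |a| < |b|` or `|b| < |a| < |c|`), then exactly one of the four vectors
`(5a+4b, -6a-5b, -c)`, `(5a-4b, 6a-5b, -c)`, `(5a+4c, -b, -6a-5c)`,
`(5a-4c, -b, 6a-5c)` has first coordinate of absolute value strictly less
than `|a|`. -/
theorem exactly_one_reduction (a b c : ℤ)
    (hq : 3 * a ^ 2 - 2 * b ^ 2 - 2 * c ^ 2 = -5)
    (ha : 1 < a)
    (hord : (|c| < |a| ∧ |a| < |b|) ∨ (|b| < |a| ∧ |a| < |c|)) :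
    ∃! i : Fin 4, |(![5 * a + 4 * b, 5 * a - 4 * b,
      5 * a + 4 * c, 5 * a - 4 * c] : Fin 4 → ℤ) i| < |a| := by
  have ha' : (0:ℤ) < a := by linarith
  rcases hord with ⟨hc, hb⟩ | ⟨hb, hc⟩
  · -- |c| < a < |b| : reduce on b
    have ha2 : 3 * a ^ 2 ≥ 12 := by nlinarith
    have h1 : 2 * b < 3 * a := by
      nlinarith [sq_nonneg (3 * a - 2 * b), sq_nonneg c]
    have h2 : -(3 * a) < 2 * b := by
      nlinarith [sq_nonneg (3 * a + 2 * b), sq_nonneg c]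
    rcases lt_or_ge b 0 with hb0 | hb0
    · refine ⟨0, ?_, ?_⟩
      · simp only [Matrix.cons_val_zero]
        simp only [Int.abs_eq_natAbs] at *
        omega
      · intro j hj
        fin_cases j <;>
          first
          | rfl
          | (exfalso
             norm_num [Matrix.cons_val_zero, Matrix.cons_val_one,
               Matrix.head_cons, Matrix.cons_val_two, Matrix.tail_cons,
               Matrix.cons_val_three] at hj
             simp only [Int.abs_eq_natAbs] at hj hb hc
             omega)
    · refine ⟨1, ?_, ?_⟩
      · simp only [Matrix.cons_val_one, Matrix.head_cons, Matrix.cons_val_zero]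
        simp only [Int.abs_eq_natAbs] at *
        omega
      · intro j hj
        fin_cases j <;>
          first
          | rfl
          | (exfalso
             norm_num [Matrix.cons_val_zero, Matrix.cons_val_one,
               Matrix.head_cons, Matrix.cons_val_two, Matrix.tail_cons,
               Matrix.cons_val_three] at hj
             simp only [Int.abs_eq_natAbs] at hj hb hc
             omega)
  · -- |b| < a < |c| : reduce on c
    have ha2 : 3 * a ^ 2 ≥ 12 := by nlinarith
    have h1 : 2 * c < 3 * a := by
      nlinarith [sq_nonneg (3 * a - 2 * c), sq_nonneg b]
    have h2 : -(3 * a) < 2 * c := by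
      nlinarith [sq_nonneg (3 * a + 2 * c), sq_nonneg b]
    rcases lt_or_ge c 0 with hc0 | hc0
    · refine ⟨2, ?_, ?_⟩
      · simp only [Matrix.cons_val_two, Matrix.tail_cons, Matrix.head_cons]
        simp only [Int.abs_eq_natAbs] at *
        omega
      · intro j hj
        fin_cases j <;>
          first
          | rfl
          | (exfalso
             norm_num [Matrix.cons_val_zero, Matrix.cons_val_one,
               Matrix.head_cons, Matrix.cons_val_two, Matrix.tail_cons,
               Matrix.cons_val_three] at hj
             simp only [Int.abs_eq_natAbs] at hj hb hc
             omega)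
    · refine ⟨3, ?_, ?_⟩
      · simp only [Matrix.cons_val_three, Matrix.tail_cons, Matrix.head_cons]
        simp only [Int.abs_eq_natAbs] at *
        omega
      · intro j hj
        fin_cases j <;>
          first
          | rfl
          | (exfalso
             norm_num [Matrix.cons_val_zero, Matrix.cons_val_one,
               Matrix.head_cons, Matrix.cons_val_two, Matrix.tail_cons,
               Matrix.cons_val_three] at hj
             simp only [Int.abs_eq_natAbs] at hj hb hc
             omega)
end
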